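/- Let $\lambda : A \times A \to (M, *)$ be a hermitian form in which the involution $*$ is the identity on $M$ (so $\lambda$ is symmetric). Then the homomorphism $p^c : M \to M^c_e$ given by $p^c(m) = [(m, 0)]$ is injective. -/

import Mathlib

/-!
When `lam` is symmetric the group `M ×_lam A` is abelian, and the relations
`(m, -a) - (m, a) = (-2 lam a a, -2 a)` form the image of the homomorphism
`a ↦ (-2 lam a a, -2 a)`. That image is therefore a normal subgroup containing the relations,
hence it contains their normal closure. An element `(c, 0)` of the image has `2 a = 0`, so
`c = -lam (2 a) a = 0`.
-/

namespace CST

/-- The normal closure of a set in an additive group: the smallest normal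
subgroup containing the set. -/
def nclosure {G : Type*} [AddGroup G] (s : Set G) : AddSubgroup G :=
  sInf {N : AddSubgroup G | N.Normal ∧ s ⊆ N}

instance nclosure_normal {G : Type*} [AddGroup G] (s : Set G) :
    (nclosure s).Normal := by
  constructor
  intro n hn g
  rw [nclosure, AddSubgroup.mem_sInf] at hn ⊢
  intro N hN
  exact hN.1.conj_mem n (hn N hN) g

variable {A M : Type*} [AddCommGroup A] [AddCommGroup M]

/-- The underlying type of the central extension `M ×_lam A` determined by a
bilinear map `lam : A × A → M`. -/
def Ext (lam : A →+ A →+ M) : Type _ := M × A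

namespace Ext

variable (lam : A →+ A →+ M)

/-- The element of `M ×_lam A` given by the pair `(m, a)`. -/
def mkE (m : M) (a : A) : Ext lam := (m, a)

instance : Add (Ext lam) :=
  ⟨fun x y => (x.1 + y.1 - lam x.2 y.2, x.2 + y.2)⟩

instance : Zero (Ext lam) := ⟨((0 : M), (0 : A))⟩

instance : Neg (Ext lam) :=
  ⟨fun x => (-x.1 - lam x.2 x.2, -x.2)⟩

theorem add_def (x y : Ext lam) :
    x + y = (x.1 + y.1 - lam x.2 y.2, x.2 + y.2) := rfl

theorem zero_def : (0 : Ext lam) = ((0 : M), (0 : A)) := rfl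

theorem neg_def (x : Ext lam) : -x = (-x.1 - lam x.2 x.2, -x.2) := rfl

/-- The operation `(m, a) + (m', a') = (m + m' - lam a a', a + a')` makes
`M ×_lam A` into a group. -/
instance : AddGroup (Ext lam) :=
  AddGroup.ofLeftAxioms
    (by
      intro x y z
      refine Prod.ext ?_ ?_
      · show x.1 + y.1 - lam x.2 y.2 + z.1 - lam (x.2 + y.2) z.2 =
          x.1 + (y.1 + z.1 - lam y.2 z.2) - lam x.2 (y.2 + z.2)
        simp only [map_add, AddMonoidHom.add_apply]; abel
      · show x.2 + y.2 + z.2 = x.2 + (y.2 + z.2)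
        abel)
    (by
      intro x
      refine Prod.ext ?_ ?_
      · show (0 : M) + x.1 - lam 0 x.2 = x.1
        simp only [map_zero, AddMonoidHom.zero_apply]; abel
      · show (0 : A) + x.2 = x.2
        abel)
    (by
      intro x
      refine Prod.ext ?_ ?_
      · show -x.1 - lam x.2 x.2 + x.1 - lam (-x.2) x.2 = 0
        simp only [map_neg, AddMonoidHom.neg_apply]; abel
      · show -x.2 + x.2 = 0
        abel)

/-- The function `h_lam (m, a) = m + m^* + lam a a`. -/
def hfun (star : M →+ M) : Ext lam → M :=
  fun x => x.1 + star x.1 + lam x.2 x.2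

/-- The function `p_lam m = (m, 0)`. -/
def pfun : M → Ext lam := fun m => mkE lam m 0

/-- The function `mu_lam a = (0, a)`. -/
def mufun : A → Ext lam := fun a => mkE lam 0 a

/-- The set of relations `(m^*, -a) - (m, a)` in `M ×_lam A`. -/
def relSet (star : M →+ M) : Set (Ext lam) :=
  {x | ∃ (m : M) (a : A), x = mkE lam (star m) (-a) - mkE lam m a}

end Ext

namespace Ext

variable (lam : A →+ A →+ M)

theorem mkE_add_mkE (m m' : M) (a a' : A) :
    mkE lam m a + mkE lam m' a' = mkE lam (m + m' - lam a a') (a + a') := rfl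

theorem neg_mkE (m : M) (a : A) : -mkE lam m a = mkE lam (-m - lam a a) (-a) := rfl

theorem mkE_inj {m m' : M} {a a' : A} :
    mkE lam m a = mkE lam m' a' ↔ m = m' ∧ a = a' := Prod.ext_iff

theorem neg_mkE_zero_add_mkE_zero (m m' : M) :
    -mkE lam m 0 + mkE lam m' 0 = mkE lam (-m + m') 0 := by
  rw [neg_mkE, mkE_add_mkE, mkE_inj]
  simp

theorem add_comm_of_symm (hsymm : ∀ a a' : A, lam a a' = lam a' a) (x y : Ext lam) :
    x + y = y + x := by
  change mkE lam x.1 x.2 + mkE lam y.1 y.2 = mkE lam y.1 y.2 + mkE lam x.1 x.2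
  rw [mkE_add_mkE, mkE_add_mkE, mkE_inj, hsymm, add_comm x.1, add_comm x.2]
  exact ⟨rfl, rfl⟩

theorem addSubgroup_normal_of_symm (hsymm : ∀ a a' : A, lam a a' = lam a' a)
    (H : AddSubgroup (Ext lam)) : H.Normal :=
  ⟨fun n hn g => by rwa [add_comm_of_symm lam hsymm g n, add_neg_cancel_right]⟩

def relHom (hsymm : ∀ a a' : A, lam a a' = lam a' a) : A →+ Ext lam where
  toFun a := mkE lam (-(2 • lam a a)) (-(2 • a))
  map_zero' := by simp; rfl
  map_add' a b := by
    rw [mkE_add_mkE, mkE_inj]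
    simp only [map_add, map_neg, map_nsmul, AddMonoidHom.add_apply, AddMonoidHom.neg_apply,
      AddMonoidHom.nsmul_apply, hsymm b a]
    constructor <;> abel

theorem relSet_subset_range_relHom (hsymm : ∀ a a' : A, lam a a' = lam a' a)
    (star : M →+ M) (star_id : ∀ m : M, star m = m) :
    relSet lam star ⊆ (relHom lam hsymm).range := by
  rintro _ ⟨m, a, rfl⟩
  refine ⟨a, ?_⟩
  change mkE lam (-(2 • lam a a)) (-(2 • a)) = _
  rw [sub_eq_add_neg, neg_mkE, mkE_add_mkE, mkE_inj, star_id]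
  simp only [map_neg, AddMonoidHom.neg_apply, neg_neg]
  constructor <;> abel

theorem eq_zero_of_mkE_mem_range_relHom (hsymm : ∀ a a' : A, lam a a' = lam a' a) {c : M}
    (hc : mkE lam c 0 ∈ (relHom lam hsymm).range) : c = 0 := by
  obtain ⟨a, ha⟩ := hc
  obtain ⟨hc, h2a⟩ := (mkE_inj lam).1 ha
  have h2a : 2 • a = 0 := neg_eq_zero.1 h2a
  rw [← hc, ← AddMonoidHom.nsmul_apply, ← map_nsmul, h2a]
  simp

end Ext

open Ext

theorem pc_injective_general (lam : A →+ A →+ M) (star : M →+ M)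
    (herm : ∀ a a' : A, lam a' a = star (lam a a'))
    (star_id : ∀ m : M, star m = m) :
    Function.Injective (fun m : M =>
      (QuotientAddGroup.mk (mkE lam m 0) :
        Ext lam ⧸ nclosure (relSet lam star))) := by
  have hsymm : ∀ a a' : A, lam a a' = lam a' a := fun a a' => by rw [herm, star_id]
  have hle : nclosure (relSet lam star) ≤ (relHom lam hsymm).range :=
    sInf_le ⟨addSubgroup_normal_of_symm lam hsymm _,
      relSet_subset_range_relHom lam hsymm star star_id⟩
  intro m m' h
  rw [QuotientAddGroup.eq, neg_mkE_zero_add_mkE_zero] at h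
  exact neg_add_eq_zero.1 (eq_zero_of_mkE_mem_range_relHom lam hsymm (hle h))

/-- If the involution on `M` is the identity (so `lam` is
symmetric), then `p^c : M → M^c_e`, `m ↦ [(m, 0)]`, is injective. -/
theorem pc_injective (lam : A →+ A →+ M) (star : M →+ M)
    (star_star : ∀ m : M, star (star m) = m)
    (herm : ∀ a a' : A, lam a' a = star (lam a a'))
    (star_id : ∀ m : M, star m = m) :
    Function.Injective (fun m : M =>
      (QuotientAddGroup.mk (mkE lam m 0) :
        Ext lam ⧸ nclosure (relSet lam star))) :=
  pc_injective_general lam star herm star_id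

end CST
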